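/- For every integer d ≥ 3, the ideal I = I_3(G) of ℂ[m_0,…,m_d] generated by the 3×3 minors of the matrix G is a prime ideal. -/

import Mathlib

open MvPolynomial

/-- The `3 × d` matrix `G` of the gamma moment variety: its `c`-th column, for `1 ≤ c ≤ d`,
is `((c-1)·m_{c-1}, m_{c-1}, m_c)ᵀ`.  Columns are indexed by `Fin d`, with `c : Fin d`
corresponding to the paper's column `c + 1`. -/
noncomputable def gammaMatrix (d : ℕ) :
    Matrix (Fin 3) (Fin d) (MvPolynomial (Fin (d + 1)) ℂ) :=
  Matrix.of fun r c =>
    ![C (c.val : ℂ) * X ⟨c.val, by have := c.isLt; omega⟩,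
      X ⟨c.val, by have := c.isLt; omega⟩,
      X ⟨c.val + 1, by have := c.isLt; omega⟩] r

/-- The ideal `I₃(G)` generated by all `3 × 3` minors of `G`, i.e. determinants of
submatrices obtained by choosing `3` of the `d` columns. -/
noncomputable def gammaIdeal (d : ℕ) : Ideal (MvPolynomial (Fin (d + 1)) ℂ) :=
  Ideal.span
    { p | ∃ s : Fin 3 → Fin d, StrictMono s ∧ p = ((gammaMatrix d).submatrix id s).det }


/-!
The substitution `m_j ↦ s tʲ x(x+1)⋯(x+j-1)` into `ℂ[x][s,t]` (the `j`-th moment of a gamma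
distribution of shape `x` and scale `t`, homogenised by `s`) makes the third row of `G` equal to
`t x` times the second plus `t` times the first, so it kills `I`. As its target is a domain, it
suffices to show that `I` is its whole kernel.

The minor on columns `p < q < r` rewrites `m_{p+1} m_q m_r` as a combination of two monomials with
the same degree and index sum but a larger sum of squared indices, so modulo `I` every polynomial
is a combination of standard monomials, those divisible by no such `m_{p+1} m_q m_r`. Their images
are linearly independent: within one degree and index sum, evaluating at `x = -k` kills exactly
the images of monomials involving some `m_j` with `j > k`, a standard monomial whose largest index
is `k < d` is determined by its degree and index sum, and the images of the monomials divisible by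
`m_d` are those of the remaining ones times `x(x+1)⋯(x+d-1)`.
-/

namespace GammaMomentVariety

open Finsupp (single weight)

section Exponents

variable {σ : Type*}

noncomputable def tripleExp (a b c : σ) : σ →₀ ℕ := single a 1 + single b 1 + single c 1

theorem weight_tripleExp (w : σ → ℕ) (a b c : σ) :
    weight w (tripleExp a b c) = w a + w b + w c := by
  simp [tripleExp, Finsupp.weight_single]

theorem monomial_mul_tripleExp {R : Type*} [CommSemiring R] (ν : σ →₀ ℕ) (a b c : σ) :
    monomial ν (1 : R) * (X a * X b * X c) = monomial (ν + tripleExp a b c) 1 := by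
  simp only [X, monomial_mul, mul_one, tripleExp, add_assoc]

theorem single_add_single_le {μ : σ →₀ ℕ} {i j : σ} (hij : i ≠ j) (hi : μ i ≠ 0)
    (hj : μ j ≠ 0) :
    single i 1 + single j 1 ≤ μ := by
  rw [Finsupp.le_def]
  intro x
  rcases eq_or_ne x i with rfl | hxi
  · simp [hij.symm]; omega
  rcases eq_or_ne x j with rfl | hxj
  · simp [hxi.symm]; omega
  simp [hxi.symm, hxj.symm]

theorem eq_single_degree {μ : σ →₀ ℕ} {a : σ} (h : ∀ j ≠ a, μ j = 0) :
    μ = single a μ.degree := by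
  have hμ : μ = single a (μ a) := Finsupp.support_subset_singleton.mp fun j hj =>
    Finset.mem_singleton.mpr (not_imp_comm.mp (h j) (Finsupp.mem_support_iff.mp hj))
  conv_rhs => rw [hμ, Finsupp.degree_single]
  exact hμ

end Exponents

variable {d : ℕ}

-- In the target, `X 0 = s`, `X 1 = t` and `Polynomial.X = x`.
noncomputable def param (d : ℕ) :
    MvPolynomial (Fin (d + 1)) ℂ →ₐ[ℂ] MvPolynomial (Fin 2) (Polynomial ℂ) :=
  aeval fun j => monomial (single 0 1 + single 1 (j : ℕ)) (ascPochhammer ℂ j)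

noncomputable def pochProd (μ : Fin (d + 1) →₀ ℕ) : Polynomial ℂ :=
  μ.prod fun j e => ascPochhammer ℂ j ^ e

noncomputable def grade (μ : Fin (d + 1) →₀ ℕ) : Fin 2 →₀ ℕ :=
  single 0 μ.degree + single 1 (weight Fin.val μ)

theorem grade_eq_sum (μ : Fin (d + 1) →₀ ℕ) :
    grade μ = μ.sum fun j e => e • (single 0 1 + single 1 (j : ℕ)) := by
  simp only [grade, Finsupp.degree_apply, Finsupp.weight_apply, Finsupp.sum, smul_add,
    Finset.sum_add_distrib, Finsupp.smul_single, smul_eq_mul, mul_one, Finsupp.single_finsetSum]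

theorem param_monomial (μ : Fin (d + 1) →₀ ℕ) (a : ℂ) :
    param d (monomial μ a) = monomial (grade μ) (Polynomial.C a * pochProd μ) := by
  simp only [param, aeval_monomial, MvPolynomial.algebraMap_apply, Polynomial.algebraMap_apply,
    Algebra.algebraMap_self, RingHom.id_apply, monomial_pow]
  rw [Finsupp.prod, ← monomial_sum_prod, C_mul_monomial, grade_eq_sum, pochProd]
  rfl

theorem param_X_succ (c : Fin d) :
    param d (X c.succ) = monomial (single 1 1) Polynomial.X * param d (X c.castSucc) +
      monomial (single 1 1) 1 * param d (C (c : ℂ) * X c.castSucc) := by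
  simp only [param, map_mul, aeval_X, aeval_C, MvPolynomial.algebraMap_apply,
    Polynomial.algebraMap_apply, Algebra.algebraMap_self, RingHom.id_apply, C_mul_monomial,
    monomial_mul, ← map_add]
  refine congr_arg₂ (fun e p => monomial e p) ?_ ?_
  · rw [Fin.val_succ, Fin.val_castSucc, Finsupp.single_add]
    abel
  · rw [Fin.val_succ, Fin.val_castSucc, ascPochhammer_succ_right]
    simp only [map_natCast]
    ring

theorem param_minor (s : Fin 3 → Fin d) :
    param d ((gammaMatrix d).submatrix id s).det = 0 := by
  rw [Matrix.det_fin_three]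
  simp only [Matrix.submatrix_apply, id_eq, gammaMatrix, Matrix.of_apply, Matrix.cons_val_zero,
    Matrix.cons_val_one, Matrix.cons_val_two, Matrix.head_cons, Matrix.tail_cons, map_add, map_sub,
    map_mul]
  have h (c : Fin d) : param d (X ⟨c + 1, by omega⟩) =
      monomial (single 1 1) Polynomial.X * param d (X ⟨c, by omega⟩) +
        monomial (single 1 1) 1 * (param d (C (c : ℂ)) * param d (X ⟨c, by omega⟩)) := by
    rw [← map_mul]
    exact param_X_succ c
  rw [h, h, h]
  ring

theorem gammaIdeal_le_ker_param : gammaIdeal d ≤ RingHom.ker (param d) := by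
  rw [gammaIdeal, Ideal.span_le]
  rintro _ ⟨s, -, rfl⟩
  exact param_minor s

noncomputable def minor (p q r : Fin d) : MvPolynomial (Fin (d + 1)) ℂ :=
  ((gammaMatrix d).submatrix id ![p, q, r]).det

theorem minor_mem_gammaIdeal {p q r : Fin d} (hpq : p < q) (hqr : q < r) :
    minor p q r ∈ gammaIdeal d :=
  Ideal.subset_span
    ⟨![p, q, r], by simp [StrictMono, Fin.forall_fin_succ, hpq, hqr, hpq.trans hqr], rfl⟩

theorem monomial_mul_minor (ν : Fin (d + 1) →₀ ℕ) (p q r : Fin d) :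
    monomial ν 1 * minor p q r =
      C ((p : ℂ) - q) * monomial (ν + tripleExp p.castSucc q.castSucc r.succ) 1 +
      C ((q : ℂ) - r) * monomial (ν + tripleExp p.succ q.castSucc r.castSucc) 1 +
      C ((r : ℂ) - p) * monomial (ν + tripleExp p.castSucc q.succ r.castSucc) 1 := by
  simp only [← monomial_mul_tripleExp]
  obtain ⟨p, hp⟩ := p
  obtain ⟨q, hq⟩ := q
  obtain ⟨r, hr⟩ := r
  rw [minor, Matrix.det_fin_three]
  simp only [Matrix.submatrix_apply, id_eq, gammaMatrix, Matrix.of_apply, Matrix.cons_val_zero,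
    Matrix.cons_val_one, Matrix.cons_val_two, Matrix.head_cons, Matrix.tail_cons, map_sub,
    Fin.castSucc_mk, Fin.succ_mk]
  ring

def IsStandard (μ : Fin (d + 1) →₀ ℕ) : Prop :=
  ∀ ⦃p q r : Fin d⦄, p < q → q < r → ¬ tripleExp p.succ q.castSucc r.castSucc ≤ μ

theorem weight_sq_le (μ : Fin (d + 1) →₀ ℕ) :
    weight (fun j : Fin (d + 1) => (j : ℕ) ^ 2) μ ≤ d * weight Fin.val μ := by
  simp only [Finsupp.weight_eq_sum, smul_eq_mul, Finset.mul_sum]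
  refine Finset.sum_le_sum fun j _ => ?_
  have : (j : ℕ) ≤ d := Nat.lt_succ_iff.mp j.isLt
  calc μ j * (j : ℕ) ^ 2 = μ j * j * j := by ring
    _ ≤ μ j * j * d := Nat.mul_le_mul_left _ this
    _ = d * (μ j * j) := by ring

theorem monomial_mem_sup_of_minor {N : Submodule ℂ (MvPolynomial (Fin (d + 1)) ℂ)}
    {p q r : Fin d} (hpq : p < q) (hqr : q < r) (ν : Fin (d + 1) →₀ ℕ)
    (hA : monomial (ν + tripleExp p.castSucc q.castSucc r.succ) (1 : ℂ) ∈
      N ⊔ (gammaIdeal d).restrictScalars ℂ)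
    (hB : monomial (ν + tripleExp p.castSucc q.succ r.castSucc) (1 : ℂ) ∈
      N ⊔ (gammaIdeal d).restrictScalars ℂ) :
    monomial (ν + tripleExp p.succ q.castSucc r.castSucc) (1 : ℂ) ∈
      N ⊔ (gammaIdeal d).restrictScalars ℂ := by
  have hqr' : (q : ℂ) - r ≠ 0 := sub_ne_zero.mpr (by exact_mod_cast (Fin.val_fin_lt.mpr hqr).ne)
  have hminor : monomial ν 1 * minor p q r ∈ (gammaIdeal d).restrictScalars ℂ :=
    Ideal.mul_mem_left _ _ (minor_mem_gammaIdeal hpq hqr)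
  rw [← inv_smul_smul₀ hqr' (monomial _ 1)]
  refine Submodule.smul_mem _ _ ?_
  rw [← C_mul', eq_sub_of_add_eq' (eq_sub_of_add_eq (monomial_mul_minor ν p q r).symm)]
  refine sub_mem (sub_mem (Submodule.mem_sup_right hminor) ?_) ?_
  · rw [C_mul']; exact Submodule.smul_mem _ _ hB
  · rw [C_mul']; exact Submodule.smul_mem _ _ hA

theorem monomial_mem_restrictSupport_sup_gammaIdeal (μ : Fin (d + 1) →₀ ℕ) :
    monomial μ (1 : ℂ) ∈
      restrictSupport ℂ {μ | IsStandard μ} ⊔ (gammaIdeal d).restrictScalars ℂ := by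
  -- The reduction raises the sum of squared indices, which is at most `d` times the index sum.
  induction hN : d * weight Fin.val μ - weight (fun j : Fin (d + 1) => (j : ℕ) ^ 2) μ
    using Nat.strong_induction_on generalizing μ with
  | _ N ih =>
  by_cases hμ : IsStandard μ
  · exact Submodule.mem_sup_left ((monomial_mem_restrictSupport ℂ).mpr (Or.inl hμ))
  obtain ⟨p, q, r, hpq, hqr, hle⟩ : ∃ p q r : Fin d, p < q ∧ q < r ∧
      tripleExp p.succ q.castSucc r.castSucc ≤ μ := by
    simpa [IsStandard] using hμ
  obtain ⟨ν, rfl⟩ : ∃ ν, μ = ν + tripleExp p.succ q.castSucc r.castSucc :=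
    ⟨_, (tsub_add_cancel_of_le hle).symm⟩
  have hpq' : (p : ℕ) < q := hpq
  have hqr' : (q : ℕ) < r := hqr
  have hwt := weight_tripleExp (σ := Fin (d + 1)) Fin.val
  have hsq := weight_tripleExp fun j : Fin (d + 1) => (j : ℕ) ^ 2
  have hlt {M : Fin (d + 1) →₀ ℕ}
      (hM : weight Fin.val M = weight Fin.val (tripleExp p.succ q.castSucc r.castSucc))
      (hM2 : weight (fun j : Fin (d + 1) => (j : ℕ) ^ 2) (tripleExp p.succ q.castSucc r.castSucc)
        < weight (fun j : Fin (d + 1) => (j : ℕ) ^ 2) M) :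
      monomial (ν + M) (1 : ℂ) ∈
        restrictSupport ℂ {μ | IsStandard μ} ⊔ (gammaIdeal d).restrictScalars ℂ := by
    refine ih _ ?_ _ rfl
    have := weight_sq_le (ν + M)
    simp only [map_add] at hN this ⊢
    rw [hM] at this ⊢
    omega
  refine monomial_mem_sup_of_minor hpq hqr ν (hlt ?_ ?_) (hlt ?_ ?_) <;>
    simp only [hwt, hsq, Fin.val_succ, Fin.val_castSucc] <;> nlinarith

theorem pochProd_add (μ ν : Fin (d + 1) →₀ ℕ) :
    pochProd (μ + ν) = pochProd μ * pochProd ν :=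
  Finsupp.prod_add_index' (fun _ => pow_zero _) fun _ => pow_add _

theorem pochProd_single (j : Fin (d + 1)) (e : ℕ) :
    pochProd (single j e) = ascPochhammer ℂ j ^ e :=
  Finsupp.prod_single_index (pow_zero _)

theorem eval_pochProd_eq_zero_iff (μ : Fin (d + 1) →₀ ℕ) (k : ℕ) :
    (pochProd μ).eval (-(k : ℂ)) = 0 ↔ ∃ j : Fin (d + 1), k < j ∧ μ j ≠ 0 := by
  simp only [pochProd, Finsupp.prod, Polynomial.eval_prod, Finset.prod_eq_zero_iff,
    Polynomial.eval_pow, pow_eq_zero_iff', ascPochhammer_eval_eq_zero_iff, neg_neg, Nat.cast_inj,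
    Finsupp.mem_support_iff]
  constructor
  · rintro ⟨j, hj, ⟨l, hl, rfl⟩, -⟩
    exact ⟨j, hl, hj⟩
  · rintro ⟨j, hl, hj⟩
    exact ⟨j, hj, ⟨k, hl, rfl⟩, hj⟩

theorem IsStandard.not_single_add_single_le {μ : Fin (d + 1) →₀ ℕ} (hμ : IsStandard μ)
    {k : Fin (d + 1)} (hkd : k ≠ Fin.last d) (hμk : μ k ≠ 0) {i j : Fin (d + 1)} (hi : 0 < i)
    (hij : i ≤ j) (hj : j < k) : ¬ single i 1 + single j 1 ≤ μ := by
  intro hle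
  have hi0 : i ≠ 0 := hi.ne'
  have hjl : j ≠ Fin.last d := (hj.trans_le (Fin.le_last k)).ne
  refine hμ (p := i.pred hi0) (q := j.castPred hjl) (r := k.castPred hkd) ?_ ?_ ?_
  · rw [← Fin.succ_lt_succ_iff, Fin.succ_pred, Fin.lt_def, Fin.val_succ,
      Fin.coe_castPred]
    exact Nat.lt_succ_of_le hij
  · rwa [← Fin.castSucc_lt_castSucc_iff, Fin.castSucc_castPred, Fin.castSucc_castPred]
  · rw [Fin.succ_pred, Fin.castSucc_castPred, Fin.castSucc_castPred, tripleExp, Finsupp.le_def]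
    intro x
    have := Finsupp.le_def.mp hle x
    rcases eq_or_ne x k with rfl | hx
    · simp only [Finsupp.add_apply, Finsupp.single_eq_same,
        Finsupp.single_eq_of_ne (hij.trans_lt hj).ne', Finsupp.single_eq_of_ne hj.ne']
      omega
    · rwa [Finsupp.add_apply, Finsupp.single_apply, if_neg hx.symm, add_zero]

theorem IsStandard.exists_eq_add_single {μ : Fin (d + 1) →₀ ℕ} (hμ : IsStandard μ)
    {k : Fin (d + 1)} (hkd : k ≠ Fin.last d) (hk0 : 0 < k) (htop : ∀ j, k < j → μ j = 0)
    (hμk : μ k ≠ 0) :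
    ∃ i < k, μ = single 0 (μ 0) + single i (if i = 0 then 0 else 1) + single k (μ k) := by
  -- `i = 0` encodes that no variable other than `m_0` and `m_k` divides `m^μ`.
  have hμ_eq {i : Fin (d + 1)} (hik : i < k)
      (hmid : ∀ j, 0 < j → j < k → μ j = if j = i then 1 else 0) :
      μ = single 0 (μ 0) + single i (if i = 0 then 0 else 1) + single k (μ k) := by
    ext j
    rcases eq_or_ne j 0 with rfl | hj0
    · simp [hk0.ne, Finsupp.single_apply]
    rcases lt_trichotomy j k with hjk | rfl | hkj
    · rw [hmid j (Fin.pos_iff_ne_zero.mpr hj0) hjk]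
      simp only [Finsupp.add_apply, Finsupp.single_apply, if_neg hjk.ne', if_neg (Ne.symm hj0),
        zero_add, add_zero, eq_comm (a := j)]
      split_ifs <;> simp_all
    · simp [hk0.ne, hik.ne]
    · simp [hkj.ne, Ne.symm hj0, htop j hkj, (hik.trans hkj).ne]
  by_cases hmid : ∃ i, 0 < i ∧ i < k ∧ μ i ≠ 0
  · obtain ⟨i, hi0, hik, hi⟩ := hmid
    refine ⟨i, hik, hμ_eq hik fun j hj0 hjk => ?_⟩
    rcases lt_trichotomy j i with hji | rfl | hij
    · rw [if_neg hji.ne]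
      by_contra hj
      exact hμ.not_single_add_single_le hkd hμk hj0 hji.le hik (single_add_single_le hji.ne hj hi)
    · have : ¬ 2 ≤ μ j := by
        rw [← Finsupp.single_le_iff, ← one_add_one_eq_two, Finsupp.single_add]
        exact hμ.not_single_add_single_le hkd hμk hi0 le_rfl hik
      rw [if_pos rfl]
      omega
    · rw [if_neg hij.ne']
      by_contra hj
      exact hμ.not_single_add_single_le hkd hμk hi0 hij.le hjk (single_add_single_le hij.ne hi hj)
  · push Not at hmid
    exact ⟨0, hk0, hμ_eq hk0 fun j hj0 hjk => (hmid j hj0 hjk).trans (if_neg hj0.ne').symm⟩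

theorem IsStandard.eq_of_top {μ ν : Fin (d + 1) →₀ ℕ} (hμ : IsStandard μ)
    (hν : IsStandard ν) {k : Fin (d + 1)} (hkd : k ≠ Fin.last d)
    (hμtop : ∀ j, k < j → μ j = 0) (hνtop : ∀ j, k < j → ν j = 0) (hμk : μ k ≠ 0)
    (hνk : ν k ≠ 0) (hdeg : μ.degree = ν.degree)
    (hwt : weight Fin.val μ = weight Fin.val ν) : μ = ν := by
  rcases (Fin.zero_le k).eq_or_lt with hk0 | hk0
  · have hsupp {μ : Fin (d + 1) →₀ ℕ} (htop : ∀ j, k < j → μ j = 0) :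
        ∀ j ≠ 0, μ j = 0 :=
      fun j hj => htop j (hk0 ▸ Fin.pos_iff_ne_zero.mpr hj)
    rw [eq_single_degree (hsupp hμtop), eq_single_degree (hsupp hνtop), hdeg]
  obtain ⟨i, hik, hμm⟩ := hμ.exists_eq_add_single hkd hk0 hμtop hμk
  obtain ⟨i', hik', hνm⟩ := hν.exists_eq_add_single hkd hk0 hνtop hνk
  have hweight {μ : Fin (d + 1) →₀ ℕ} {i : Fin (d + 1)}
      (h : μ = single 0 (μ 0) + single i (if i = 0 then 0 else 1) + single k (μ k)) :
      weight Fin.val μ = i + k * μ k := by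
    conv_lhs => rw [h]
    split_ifs with hi <;> simp [Finsupp.weight_single, hi, mul_comm]
  rw [hweight hμm, hweight hνm] at hwt
  obtain ⟨hk, hii⟩ : μ k = ν k ∧ (i : ℕ) = i' := by
    obtain ⟨h1, h2⟩ := (Nat.div_mod_unique hk0).mpr ⟨rfl, hik⟩
    obtain ⟨h3, h4⟩ := (Nat.div_mod_unique hk0).mpr ⟨hwt.symm, hik'⟩
    exact ⟨h1.symm.trans h3, h2.symm.trans h4⟩
  obtain rfl : i = i' := Fin.ext hii
  have h0 : μ 0 = ν 0 := by
    have hμd := congrArg Finsupp.degree hμm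
    have hνd := congrArg Finsupp.degree hνm
    simp only [map_add, Finsupp.degree_single] at hμd hνd
    omega
  rw [hμm, hνm, h0, hk]

def standardSlice (d n w : ℕ) : Set (Fin (d + 1) →₀ ℕ) :=
  {μ | IsStandard μ ∧ μ.degree = n ∧ weight Fin.val μ = w}

theorem IsStandard.mono {μ ν : Fin (d + 1) →₀ ℕ} (hμ : IsStandard μ) (hνμ : ν ≤ μ) :
    IsStandard ν :=
  fun _ _ _ hpq hqr hle => hμ hpq hqr (hle.trans hνμ)

theorem mem_standardSlice_of_add_single_last {n w : ℕ} {ν : Fin (d + 1) →₀ ℕ}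
    (h : ν + single (Fin.last d) 1 ∈ standardSlice d (n + 1) w) :
    ν ∈ standardSlice d n (w - d) := by
  obtain ⟨hstd, hdeg, hwt⟩ := h
  simp only [map_add, Finsupp.degree_single, Finsupp.weight_single, Fin.val_last, smul_eq_mul,
    one_mul] at hdeg hwt
  exact ⟨hstd.mono le_self_add, by omega, by omega⟩

theorem pochProd_zero : pochProd (0 : Fin (d + 1) →₀ ℕ) = 1 :=
  Finsupp.prod_zero_index

theorem coeff_eq_zero_of_sum_smul_pochProd_eq_zero {n w : ℕ} {t : Finset (Fin (d + 1) →₀ ℕ)}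
    (ht : ↑t ⊆ standardSlice d n w)
    {g : (Fin (d + 1) →₀ ℕ) → ℂ} (hsum : ∑ μ ∈ t, g μ • pochProd μ = 0)
    {k : ℕ} (hkd : k ≤ d) {μ : Fin (d + 1) →₀ ℕ} (hμt : μ ∈ t)
    (hμ : ∀ j : Fin (d + 1), k ≤ j → μ j = 0) : g μ = 0 := by
  induction k generalizing μ with
  | zero =>
    obtain rfl : μ = 0 := Finsupp.ext fun j => hμ j j.val.zero_le
    have ht0 (ν) (hν : ν ∈ t) : ν = 0 :=
      (Finsupp.degree_eq_zero_iff _).mp ((ht hν).2.1.trans ((ht hμt).2.1.symm.trans (map_zero _)))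
    rw [Finset.sum_eq_single_of_mem 0 hμt fun ν hν hne => absurd (ht0 ν hν) hne, pochProd_zero,
      smul_eq_zero] at hsum
    exact hsum.resolve_right one_ne_zero
  | succ k ih =>
    set K : Fin (d + 1) := ⟨k, by omega⟩
    have hKd : K ≠ Fin.last d := Fin.ne_of_val_ne (by simp [K]; omega)
    have hbelow {ν : Fin (d + 1) →₀ ℕ} (hν : ∀ j : Fin (d + 1), k + 1 ≤ j → ν j = 0)
        (hνK : ν K = 0) : ∀ j : Fin (d + 1), k ≤ j → ν j = 0 := fun j hj =>
      (Nat.eq_or_lt_of_le hj).elim (fun h => (show j = K from Fin.ext h.symm) ▸ hνK) (hν j)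
    by_cases hμK : μ K = 0
    · exact ih (by omega) hμt (hbelow hμ hμK)
    have heval := congrArg (Polynomial.eval (-(k : ℂ))) hsum
    rw [Polynomial.eval_finsetSum, Polynomial.eval_zero, Finset.sum_eq_single_of_mem μ hμt,
      Polynomial.eval_smul, smul_eq_zero, eval_pochProd_eq_zero_iff] at heval
    · refine heval.resolve_right ?_
      rintro ⟨j, hkj, hj⟩
      exact hj (hμ j hkj)
    intro ν hνt hne
    rw [Polynomial.eval_smul, smul_eq_zero, eval_pochProd_eq_zero_iff]
    by_contra! hν
    refine hne ((ht hνt).1.eq_of_top (ht hμt).1 hKd (fun j hj => ?_) (fun j hj => hμ j hj) ?_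
      hμK
      ((ht hνt).2.1.trans (ht hμt).2.1.symm) ((ht hνt).2.2.trans (ht hμt).2.2.symm))
    · exact hν.2 j hj
    · exact fun hνK => hν.1 (ih (by omega) hνt (hbelow hν.2 hνK))

theorem linearIndepOn_pochProd (n w : ℕ) :
    LinearIndepOn ℂ pochProd (standardSlice d n w) := by
  induction n generalizing w with
  | zero =>
    refine linearIndepOn_iff'.mpr fun t g ht hsum μ hμt => ?_
    refine coeff_eq_zero_of_sum_smul_pochProd_eq_zero ht hsum le_rfl hμt fun j _ => ?_
    rw [(Finsupp.degree_eq_zero_iff μ).mp (ht hμt).2.1, Finsupp.coe_zero, Pi.zero_apply]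
  | succ n ih =>
    refine linearIndepOn_iff'.mpr fun t g ht hsum => ?_
    set e : Fin (d + 1) →₀ ℕ := single (Fin.last d) 1
    have hlast {μ} (hμt : μ ∈ t) (hμ : μ (Fin.last d) = 0) : g μ = 0 :=
      coeff_eq_zero_of_sum_smul_pochProd_eq_zero ht hsum le_rfl hμt fun j hj =>
        (Fin.last_le_iff.mp hj) ▸ hμ
    have he {μ : Fin (d + 1) →₀ ℕ} (hμ : μ (Fin.last d) ≠ 0) : μ - e + e = μ :=
      tsub_add_cancel_of_le (Finsupp.single_le_iff.mpr (Nat.one_le_iff_ne_zero.mpr hμ))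
    have hinj : Set.InjOn (· + e) ((· + e) ⁻¹' ↑t) := (add_left_injective e).injOn
    have hsum' : (∑ ν ∈ t.preimage (· + e) hinj, g (ν + e) • pochProd ν) *
        ascPochhammer ℂ d = 0 := by
      rw [Finset.sum_mul, ← hsum, ← Finset.sum_preimage (· + e) t hinj _ fun μ hμt hμ => ?_]
      · refine Finset.sum_congr rfl fun ν _ => ?_
        rw [pochProd_add, pochProd_single, pow_one, smul_mul_assoc, Fin.val_last]
      · have : μ (Fin.last d) = 0 := by
          by_contra h
          exact hμ ⟨μ - e, he h⟩
        rw [hlast hμt this, zero_smul]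
    have hg := linearIndepOn_iff'.mp (ih (w - d)) _ (fun ν => g (ν + e)) ?_
      ((mul_eq_zero.mp hsum').resolve_right (monic_ascPochhammer ℂ d).ne_zero)
    · intro μ hμt
      by_cases hμ : μ (Fin.last d) = 0
      · exact hlast hμt hμ
      rw [← he hμ]
      exact hg _ (Finset.mem_preimage.mpr ((he hμ).symm ▸ hμt))
    · intro ν hν
      have hνe : ν + e ∈ t := (Finset.mem_preimage (f := (· + e))).mp hν
      exact mem_standardSlice_of_add_single_last (ht hνe)

theorem coeff_param (v : MvPolynomial (Fin (d + 1)) ℂ) (γ : Fin 2 →₀ ℕ) :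
    (param d v).coeff γ = ∑ μ ∈ v.support with grade μ = γ, v.coeff μ • pochProd μ := by
  conv_lhs => rw [v.as_sum]
  rw [map_sum, coeff_sum, Finset.sum_filter]
  refine Finset.sum_congr rfl fun μ _ => ?_
  rw [param_monomial, coeff_monomial, Polynomial.smul_eq_C_mul]

theorem degree_eq_and_weight_eq_of_grade_eq {μ ν : Fin (d + 1) →₀ ℕ}
    (h : grade μ = grade ν) :
    μ.degree = ν.degree ∧ weight Fin.val μ = weight Fin.val ν := by
  have h0 := DFunLike.congr_fun h 0
  have h1 := DFunLike.congr_fun h 1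
  simp [grade] at h0 h1
  exact ⟨h0, h1⟩

theorem disjoint_restrictSupport_ker_param :
    Disjoint (restrictSupport ℂ {μ | IsStandard μ})
      ((RingHom.ker (param d)).restrictScalars ℂ) := by
  refine Submodule.disjoint_def.mpr fun v hv hker => ?_
  ext μ
  rw [coeff_zero]
  by_contra hμ
  have h := congrArg (coeff (grade μ)) (RingHom.mem_ker.mp hker)
  rw [coeff_param, coeff_zero] at h
  refine hμ (linearIndepOn_iff'.mp (linearIndepOn_pochProd μ.degree (weight Fin.val μ)) _ _
    (fun ν hν => ?_) h μ (Finset.mem_filter.mpr ⟨mem_support_iff.mpr hμ, rfl⟩))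
  obtain ⟨hνv, hνμ⟩ := Finset.mem_filter.mp hν
  exact ⟨hv hνv, degree_eq_and_weight_eq_of_grade_eq hνμ⟩

theorem restrictSupport_sup_gammaIdeal_eq_top :
    restrictSupport ℂ {μ | IsStandard μ} ⊔ (gammaIdeal d).restrictScalars ℂ = ⊤ := by
  refine eq_top_iff.mpr fun f _ => ?_
  rw [f.as_sum]
  refine Submodule.sum_mem _ fun μ _ => ?_
  rw [← mul_one (coeff μ f), ← smul_eq_mul, ← smul_monomial]
  exact Submodule.smul_mem _ _ (monomial_mem_restrictSupport_sup_gammaIdeal μ)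

theorem gammaIdeal_eq_ker_param : gammaIdeal d = RingHom.ker (param d) := by
  refine Submodule.restrictScalars_injective ℂ _ _ <| eq_of_le_of_inf_le_of_sup_le
    (z := restrictSupport ℂ {μ | IsStandard μ})
    (Submodule.restrictScalars_mono ℂ gammaIdeal_le_ker_param) ?_ ?_
  · rw [inf_comm, disjoint_iff.mp disjoint_restrictSupport_ker_param]
    exact bot_le
  · rw [sup_comm (Submodule.restrictScalars ℂ (gammaIdeal d)),
      restrictSupport_sup_gammaIdeal_eq_top]
    exact le_top

end GammaMomentVariety

theorem gammaIdeal_isPrime_general (d : ℕ) : (gammaIdeal d).IsPrime := by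
  rw [GammaMomentVariety.gammaIdeal_eq_ker_param]
  exact RingHom.ker_isPrime _

/-- For every `d ≥ 3`, the ideal `I₃(G)` of the gamma moment variety is prime. -/
theorem gammaIdeal_isPrime (d : ℕ) (hd : 3 ≤ d) : (gammaIdeal d).IsPrime :=
  gammaIdeal_isPrime_general d
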